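/- arXiv:2604.27166 — 5 statements merged into one kernel-verified Lean document; each statement's English description precedes it below -/
import Mathlib

section
/- Let Z be a finite nonempty type, β > 0, and let R : Δ(Z) → ℝ be convex and continuous, with Fenchel conjugate R*(u) = sup_{ν ∈ Δ(Z)} (⟨ν, u⟩ − R(ν)) for u : Z → ℝ. Then for every ν ∈ Δ(Z), R(ν) = sup over strictly positive q ∈ Δ(Z) of the quantity (−β ∑_{z ∈ Z} ν(z) log q(z) − R*(−β log q)); that is, the answer-level functional equals the value of the distributional game over normalized positive targets q. -/
open Set

private lemma sSup_image_add_const (s : Set ℝ) (hs : s.Nonempty) (hb : BddAbove s) (c : ℝ) :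
    sSup ((fun x => x + c) '' s) = sSup s + c := by
  apply IsLUB.csSup_eq _ (hs.image _)
  constructor
  · rintro _ ⟨x, hx, rfl⟩
    exact add_le_add_left (le_csSup hb hx) c
  · intro b hb'
    have h : sSup s ≤ b - c := csSup_le hs fun x hx => by
      have h2 : x + c ≤ b := hb' ⟨x, hx, rfl⟩
      linarith
    linarith

private lemma single_decomp {Z : Type*} [Fintype Z] [DecidableEq Z] (x : Z → ℝ) :
    x = ∑ z, x z • (Pi.single z (1 : ℝ) : Z → ℝ) := by
  have h : ∀ z : Z, x z • (Pi.single z (1 : ℝ) : Z → ℝ) = Pi.single z (x z) := by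
    intro z; funext w
    by_cases hw : w = z <;> simp [Pi.single_apply, hw]
  simp_rw [h, Finset.univ_sum_single]

/-- Let `Z` be finite nonempty, `β > 0`, and `R` convex and continuous on
the simplex, with Fenchel conjugate `R*(u) = sup_{ν ∈ Δ(Z)} (⟨ν, u⟩ − R(ν))`.  Then for
every `ν ∈ Δ(Z)`,
`R(ν) = sup_{q ∈ Δ(Z), q > 0} (−β ∑ z, ν z log (q z) − R*(−β log q))`. -/
theorem game_value_equals_answer_functional
    (Z : Type*) [Fintype Z] [Nonempty Z]
    (β : ℝ) (hβ : 0 < β)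
    (R : (Z → ℝ) → ℝ)
    (hconv : ConvexOn ℝ (stdSimplex ℝ Z) R)
    (hcont : ContinuousOn R (stdSimplex ℝ Z))
    (ν : Z → ℝ) (hν : ν ∈ stdSimplex ℝ Z) :
    R ν = sSup {x : ℝ | ∃ q ∈ stdSimplex ℝ Z, (∀ z, 0 < q z) ∧
      x = (-β * ∑ z, ν z * Real.log (q z)) -
        sSup ((fun ρ : Z → ℝ =>
          (∑ z, ρ z * (-β * Real.log (q z))) - R ρ) '' stdSimplex ℝ Z)} := by
  classical
  have hSne : (stdSimplex ℝ Z).Nonempty := ⟨ν, hν⟩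
  have hScomp : IsCompact (stdSimplex ℝ Z) := isCompact_stdSimplex ℝ Z
  have hSclosed : IsClosed (stdSimplex ℝ Z) := hScomp.isClosed
  set F : (Z → ℝ) → (Z → ℝ) → ℝ := fun u ρ => (∑ z, ρ z * u z) - R ρ with hF
  have hFcont : ∀ u, ContinuousOn (F u) (stdSimplex ℝ Z) := by
    intro u
    exact ContinuousOn.sub
      ((continuous_finset_sum Finset.univ fun z _ =>
        (continuous_apply z).mul continuous_const).continuousOn) hcont
  have hbdd : ∀ u, BddAbove (F u '' stdSimplex ℝ Z) := fun u =>
    (hScomp.image_of_continuousOn (hFcont u)).bddAbove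
  have hne : ∀ u, (F u '' stdSimplex ℝ Z).Nonempty := fun u => hSne.image _
  set Rs : (Z → ℝ) → ℝ := fun u => sSup (F u '' stdSimplex ℝ Z) with hRs
  have hRs_ge : ∀ u, ∀ ρ ∈ stdSimplex ℝ Z, (∑ z, ρ z * u z) - R ρ ≤ Rs u := fun u ρ hρ =>
    le_csSup (hbdd u) ⟨ρ, hρ, rfl⟩
  have hRs_le : ∀ u (b : ℝ), (∀ ρ ∈ stdSimplex ℝ Z, (∑ z, ρ z * u z) - R ρ ≤ b) → Rs u ≤ b :=
    fun u b h => csSup_le (hne u) (by rintro _ ⟨ρ, hρ, rfl⟩; exact h ρ hρ)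
  have hshift : ∀ (u : Z → ℝ) (c : ℝ), Rs (fun z => u z + c) = Rs u + c := by
    intro u c
    have himg : F (fun z => u z + c) '' stdSimplex ℝ Z
        = (fun x => x + c) '' (F u '' stdSimplex ℝ Z) := by
      rw [Set.image_image]
      apply Set.image_congr
      intro ρ hρ
      simp only [hF]
      have hsum : ∑ z, ρ z * (u z + c) = (∑ z, ρ z * u z) + c := by
        rw [Finset.sum_congr rfl (fun z _ => mul_add (ρ z) (u z) c), Finset.sum_add_distrib,
          ← Finset.sum_mul, hρ.2, one_mul]
      rw [hsum]; ring
    rw [hRs]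
    simp only
    rw [himg, sSup_image_add_const _ (hne u) (hbdd u)]
  have hval : ∀ q : Z → ℝ,
      (-β * ∑ z, ν z * Real.log (q z)) -
        sSup ((fun ρ : Z → ℝ =>
          (∑ z, ρ z * (-β * Real.log (q z))) - R ρ) '' stdSimplex ℝ Z)
      = (∑ z, ν z * (-β * Real.log (q z))) - Rs (fun z => -β * Real.log (q z)) := by
    intro q
    have h1 : Rs (fun z => -β * Real.log (q z))
        = sSup ((fun ρ : Z → ℝ =>
          (∑ z, ρ z * (-β * Real.log (q z))) - R ρ) '' stdSimplex ℝ Z) := rfl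
    rw [h1]
    congr 1
    rw [Finset.mul_sum]
    exact Finset.sum_congr rfl fun z _ => by ring
  set G : Set ℝ := {x : ℝ | ∃ q ∈ stdSimplex ℝ Z, (∀ z, 0 < q z) ∧
      x = (-β * ∑ z, ν z * Real.log (q z)) -
        sSup ((fun ρ : Z → ℝ =>
          (∑ z, ρ z * (-β * Real.log (q z))) - R ρ) '' stdSimplex ℝ Z)} with hG
  have hub : ∀ x ∈ G, x ≤ R ν := by
    rintro x ⟨q, hqS, hqpos, rfl⟩
    rw [hval q]
    have := hRs_ge (fun z => -β * Real.log (q z)) ν hν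
    linarith
  have hGne : G.Nonempty := by
    have hcard : (0 : ℝ) < (Fintype.card Z : ℝ) := by
      exact_mod_cast Fintype.card_pos
    refine ⟨_, fun _ => (Fintype.card Z : ℝ)⁻¹, ?_, fun z => by positivity, rfl⟩
    constructor
    · intro z; positivity
    · simp only [Finset.sum_const, Finset.card_univ, nsmul_eq_mul]
      rw [mul_inv_cancel₀ hcard.ne']
  have hGbdd : BddAbove G := ⟨R ν, hub⟩
  have hkey : ∀ η : ℝ, 0 < η → ∃ x ∈ G, R ν - η < x := by
    intro η hη
    set E : Set ((Z → ℝ) × ℝ) := {p | p.1 ∈ stdSimplex ℝ Z ∧ R p.1 ≤ p.2} with hE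
    have hEconv : Convex ℝ E := by
      rintro p ⟨hp1, hp2⟩ r ⟨hr1, hr2⟩ a b ha hb hab
      refine ⟨(convex_stdSimplex ℝ Z) hp1 hr1 ha hb hab, ?_⟩
      have hcv := hconv.2 hp1 hr1 ha hb hab
      have h2 : a * R p.1 + b * R r.1 ≤ a * p.2 + b * r.2 := by
        gcongr
      calc R (a • p + b • r).1 = R (a • p.1 + b • r.1) := rfl
        _ ≤ a * R p.1 + b * R r.1 := by simpa [smul_eq_mul] using hcv
        _ ≤ a * p.2 + b * r.2 := h2
        _ = (a • p + b • r).2 := by simp [smul_eq_mul]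
    have hEclosed : IsClosed E := by
      have heq : E = (stdSimplex ℝ Z ×ˢ (univ : Set ℝ)) ∩
          (fun p : (Z → ℝ) × ℝ => p.2 - R p.1) ⁻¹' Ici 0 := by
        ext p
        simp only [hE, mem_inter_iff, mem_prod, mem_univ, and_true, mem_preimage, mem_Ici,
          mem_setOf_eq, sub_nonneg]
      rw [heq]
      apply ContinuousOn.preimage_isClosed_of_isClosed
      · exact ContinuousOn.sub continuous_snd.continuousOn
          (hcont.comp continuous_fst.continuousOn fun p hp => hp.1)
      · exact hSclosed.prod isClosed_univ
      · exact isClosed_Ici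
    have hx0 : ((ν, R ν - η) : (Z → ℝ) × ℝ) ∉ E := by
      rintro ⟨-, h2⟩
      simp only at h2
      linarith
    obtain ⟨f, u, hfu, hsep⟩ := geometric_hahn_banach_point_closed hEconv hEclosed hx0
    set c : ℝ := f ((0 : Z → ℝ), (1 : ℝ)) with hc
    have hdecomp : ∀ (x : Z → ℝ) (t : ℝ), f (x, t) = f (x, 0) + t * c := by
      intro x t
      have hxt : ((x, t) : (Z → ℝ) × ℝ) = (x, 0) + t • ((0 : Z → ℝ), (1 : ℝ)) := by
        simp [Prod.ext_iff]
      rw [hxt, map_add, map_smul, smul_eq_mul]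
    have hcpos : 0 < c := by
      rcases lt_trichotomy c 0 with h | h | h
      · exfalso
        set t : ℝ := max (R ν) ((u - f (ν, 0)) / c) with ht
        have hmem : ((ν, t) : (Z → ℝ) × ℝ) ∈ E := ⟨hν, le_max_left _ _⟩
        have h1 := hsep _ hmem
        rw [hdecomp] at h1
        have h2 : (u - f (ν, 0)) / c ≤ t := le_max_right _ _
        rw [div_le_iff_of_neg h] at h2
        linarith
      · exfalso
        have h1 := hsep (ν, R ν) ⟨hν, le_refl _⟩
        rw [hdecomp, h, mul_zero, add_zero] at h1
        rw [hdecomp, h, mul_zero, add_zero] at hfu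
        linarith
      · exact h
    have hlin : ∀ x : Z → ℝ, f (x, 0) = ∑ z, x z * f (Pi.single z 1, 0) := by
      intro x
      have hx : ((x, (0 : ℝ)) : (Z → ℝ) × ℝ)
          = ∑ z, x z • ((Pi.single z 1 : Z → ℝ), (0 : ℝ)) := by
        rw [Prod.ext_iff]
        constructor
        · simp only [Prod.fst_sum, Prod.smul_fst]
          exact single_decomp x
        · simp [Prod.snd_sum]
      rw [hx, map_sum]
      exact Finset.sum_congr rfl fun z _ => by rw [map_smul, smul_eq_mul]
    set v : Z → ℝ := fun z => -(f (Pi.single z 1, 0)) / c with hv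
    have hvsum : ∀ x : Z → ℝ, ∑ z, x z * v z = -(f (x, 0)) / c := by
      intro x
      rw [hlin x]
      simp only [hv]
      rw [Finset.sum_congr rfl fun z _ =>
        (by ring : x z * (-f (Pi.single z 1, 0) / c) = -(x z * f (Pi.single z 1, 0)) / c),
        ← Finset.sum_div, Finset.sum_neg_distrib, neg_div]
    have hRsv : Rs v ≤ -u / c := by
      apply hRs_le
      intro ρ hρ
      have h1 := hsep (ρ, R ρ) ⟨hρ, le_refl _⟩
      rw [hdecomp] at h1
      rw [hvsum ρ]
      have heq : -(f (ρ, 0)) / c - R ρ = (-(f (ρ, 0)) - c * R ρ) / c := by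
        field_simp
      rw [heq, (div_le_div_iff_of_pos_right hcpos)]
      nlinarith
    have hlow : R ν - η < (∑ z, ν z * v z) - Rs v := by
      have h1 : f (ν, R ν - η) < u := hfu
      rw [hdecomp] at h1
      have h2 : R ν - η < (u - f (ν, 0)) / c := by
        rw [lt_div_iff₀ hcpos]; linarith
      have h3 : (u - f (ν, 0)) / c = -(f (ν, 0)) / c + u / c := by ring
      have h4 : -u / c = -(u / c) := by ring
      linarith [hRsv, hvsum ν, h2, h3]
    -- construct q from v
    set Ssum : ℝ := ∑ z, Real.exp (-(v z) / β) with hSs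
    have hSsum : 0 < Ssum :=
      Finset.sum_pos (fun z _ => Real.exp_pos _) Finset.univ_nonempty
    set q : Z → ℝ := fun z => Real.exp (-(v z) / β) / Ssum with hq
    have hqpos : ∀ z, 0 < q z := fun z => div_pos (Real.exp_pos _) hSsum
    have hqS : q ∈ stdSimplex ℝ Z := by
      refine ⟨fun z => (hqpos z).le, ?_⟩
      rw [hq]
      simp only
      rw [← Finset.sum_div, div_self hSsum.ne']
    set c₀ : ℝ := β * Real.log Ssum with hc₀
    have hlogq : ∀ z, -β * Real.log (q z) = v z + c₀ := by
      intro z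
      rw [hq]
      simp only
      rw [Real.log_div (Real.exp_ne_zero _) hSsum.ne', Real.log_exp]
      field_simp
      ring
    refine ⟨_, ⟨q, hqS, hqpos, rfl⟩, ?_⟩
    rw [hval q]
    have e1 : (fun z => -β * Real.log (q z)) = (fun z => v z + c₀) := funext hlogq
    have e2 : ∑ z, ν z * (-β * Real.log (q z)) = (∑ z, ν z * v z) + c₀ := by
      rw [Finset.sum_congr rfl (fun z _ => by rw [hlogq z])]
      rw [Finset.sum_congr rfl (fun z _ => mul_add (ν z) (v z) c₀), Finset.sum_add_distrib,
        ← Finset.sum_mul, hν.2, one_mul]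
    rw [e2, e1, hshift v c₀]
    linarith
  apply le_antisymm
  · by_contra hlt
    push_neg at hlt
    obtain ⟨x, hxG, hx⟩ := hkey (R ν - sSup G) (by linarith)
    have := le_csSup hGbdd hxG
    linarith
  · exact csSup_le hGne hub
end

section
/- Let Y be a finite nonempty type, K ≥ 1, and p₁, …, p_K ∈ Δ(Y). Define G(y) = (∏_{k=1}^K p_k(y))^{1/K}, Z = ∑_{y ∈ Y} G(y), the normalized geometric mean π_GM(y) = G(y)/Z (assuming Z > 0), and the arithmetic mean π_AM(y) = (1/K) ∑_{k=1}^K p_k(y). Then ∑_{y ∈ Y} |π_AM(y) − π_GM(y)| ≤ 2(1 − Z); in other words, the L¹ distance between the arithmetic mean and the normalized geometric mean is at most twice the generalized squared Hellinger distance H²(p₁, …, p_K) = 1 − Z. -/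
/-- For `p₁, …, p_K ∈ Δ(Y)` with `G(y) = (∏ k, p k y)^(1/K)`,
`Z = ∑ y, G(y) > 0`, normalized geometric mean `π_GM = G/Z` and arithmetic mean
`π_AM(y) = (1/K) ∑ k, p k y`, the L¹ distance satisfies
`∑ y, |π_AM y − π_GM y| ≤ 2 (1 − Z)`, i.e. it is at most twice the generalized squared
Hellinger distance `H² = 1 − Z`. -/
theorem am_gm_l1_distance_le_twice_hellinger
    (Y : Type*) [Fintype Y] [Nonempty Y]
    (K : ℕ) (hK : 1 ≤ K) (p : Fin K → Y → ℝ)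
    (hp : ∀ k, p k ∈ stdSimplex ℝ Y)
    (Znorm : ℝ) (hZdef : Znorm = ∑ y, (∏ k, p k y) ^ ((1 : ℝ) / K))
    (hZpos : 0 < Znorm) :
    ∑ y, |((1 : ℝ) / K) * (∑ k, p k y) - ((∏ k, p k y) ^ ((1 : ℝ) / K)) / Znorm|
      ≤ 2 * (1 - Znorm) := by
  have hKpos : (0 : ℝ) < K := by exact_mod_cast hK
  set G : Y → ℝ := fun y => (∏ k, p k y) ^ ((1 : ℝ) / K) with hG
  set A : Y → ℝ := fun y => ((1 : ℝ) / K) * (∑ k, p k y) with hA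
  have hGnn : ∀ y, 0 ≤ G y := fun y =>
    Real.rpow_nonneg (Finset.prod_nonneg fun k _ => (hp k).1 y) _
  have hAMGM : ∀ y, G y ≤ A y := by
    intro y
    have h := Real.geom_mean_le_arith_mean_weighted Finset.univ
      (fun _ : Fin K => (1 : ℝ) / K) (fun k => p k y)
      (fun _ _ => by positivity)
      (by simp [Finset.sum_const]; field_simp)
      (fun k _ => (hp k).1 y)
    calc G y = ∏ k, (p k y) ^ ((1 : ℝ) / K) :=
          (Real.finset_prod_rpow _ _ (fun k _ => (hp k).1 y) _).symm
      _ ≤ ∑ k, ((1 : ℝ) / K) * p k y := h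
      _ = A y := by simp [hA, Finset.mul_sum]
  have hAsum : ∑ y, A y = 1 := by
    rw [← Finset.mul_sum, Finset.sum_comm]
    have : ∀ k : Fin K, ∑ y, p k y = 1 := fun k => (hp k).2
    simp [this]
    field_simp
  have hZle1 : Znorm ≤ 1 := by
    rw [hZdef]
    calc ∑ y, G y ≤ ∑ y, A y := Finset.sum_le_sum fun y _ => hAMGM y
      _ = 1 := hAsum
  have hbound : ∀ y, |A y - G y / Znorm| ≤ (A y - G y) + G y * (1 / Znorm - 1) := by
    intro y
    have h1 : G y / Znorm = G y + G y * (1 / Znorm - 1) := by field_simp; ring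
    rw [abs_sub_le_iff]
    constructor
    · nlinarith [hAMGM y, hGnn y, mul_nonneg (hGnn y) (sub_nonneg.2 (one_le_one_div hZpos hZle1 : 1 ≤ 1 / Znorm))]
    · nlinarith [hAMGM y, hGnn y, mul_nonneg (hGnn y) (sub_nonneg.2 (one_le_one_div hZpos hZle1 : 1 ≤ 1 / Znorm))]
  calc ∑ y, |A y - G y / Znorm| ≤ ∑ y, ((A y - G y) + G y * (1 / Znorm - 1)) :=
        Finset.sum_le_sum fun y _ => hbound y
    _ = (1 - Znorm) + Znorm * (1 / Znorm - 1) := by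
        rw [Finset.sum_add_distrib, Finset.sum_sub_distrib, hAsum, ← Finset.sum_mul, ← hZdef]
    _ ≤ 2 * (1 - Znorm) := by
        have : Znorm * (1 / Znorm - 1) = 1 - Znorm := by field_simp
        linarith
end

section
/- Let Y be a finite nonempty type, K ≥ 1, and p₁, …, p_K ∈ Δ(Y) with p_k(y) > 0 for all k and y. Then the function q ↦ (1/K) ∑_{k=1}^K KL(q ‖ p_k) over Δ(Y) attains its minimum at the unique point q*(y) = (∏_{k=1}^K p_k(y))^{1/K} / Z, where Z = ∑_{y' ∈ Y} (∏_{k=1}^K p_k(y'))^{1/K}; i.e. the normalized geometric mean is the unique minimizer of the average reverse KL divergence. -/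
-- Per-term Gibbs inequality: for a ≥ 0, b > 0, a * (log a - log b) ≥ a - b,
-- strictly if a ≠ b.
lemma gibbs_term_le {a b : ℝ} (ha : 0 ≤ a) (hb : 0 < b) :
    a - b ≤ a * (Real.log a - Real.log b) := by
  rcases eq_or_lt_of_le ha with h | h
  · simp [← h]; linarith
  · have hba : 0 < b / a := div_pos hb h
    have := Real.log_le_sub_one_of_pos hba
    have hlog : Real.log (b / a) = Real.log b - Real.log a := Real.log_div hb.ne' h.ne'
    rw [hlog] at this
    have : Real.log b - Real.log a ≤ b / a - 1 := this
    have h2 : a * (Real.log b - Real.log a) ≤ a * (b / a - 1) := by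
      exact mul_le_mul_of_nonneg_left this ha
    have h3 : a * (b / a - 1) = b - a := by field_simp
    nlinarith [h2, h3]

lemma gibbs_term_lt {a b : ℝ} (ha : 0 ≤ a) (hb : 0 < b) (hne : a ≠ b) :
    a - b < a * (Real.log a - Real.log b) := by
  rcases eq_or_lt_of_le ha with h | h
  · simp [← h]; linarith
  · have hba : 0 < b / a := div_pos hb h
    have hba1 : b / a ≠ 1 := by
      intro hh
      exact hne (by field_simp at hh; linarith)
    have := Real.log_lt_sub_one_of_pos hba hba1
    have hlog : Real.log (b / a) = Real.log b - Real.log a := Real.log_div hb.ne' h.ne'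
    rw [hlog] at this
    have h2 : a * (Real.log b - Real.log a) < a * (b / a - 1) := by
      exact (mul_lt_mul_iff_right₀ h).mpr this
    have h3 : a * (b / a - 1) = b - a := by field_simp
    nlinarith [h2, h3]

/-- For strictly positive `p₁, …, p_K ∈ Δ(Y)`, the average reverse KL
objective `q ↦ (1/K) ∑ k, KL(q ‖ p_k)` over `Δ(Y)` attains its minimum at the unique
point `q*(y) = (∏ k, p k y)^(1/K) / Z` with `Z = ∑ y', (∏ k, p k y')^(1/K)`:
the normalized geometric mean is the unique minimizer. -/
theorem geometric_mean_minimizes_average_reverse_kl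
    (Y : Type*) [Fintype Y] [Nonempty Y]
    (K : ℕ) (hK : 1 ≤ K) (p : Fin K → Y → ℝ)
    (hp : ∀ k, p k ∈ stdSimplex ℝ Y) (hpos : ∀ k y, 0 < p k y) :
    let F : (Y → ℝ) → ℝ := fun q =>
      ((1 : ℝ) / K) * ∑ k, ∑ y, q y * Real.log (q y / p k y)
    let qs : Y → ℝ := fun y =>
      (∏ k, p k y) ^ ((1 : ℝ) / K) / (∑ y', (∏ k, p k y') ^ ((1 : ℝ) / K))
    qs ∈ stdSimplex ℝ Y ∧
      (∀ q ∈ stdSimplex ℝ Y, F qs ≤ F q) ∧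
      (∀ q ∈ stdSimplex ℝ Y, (∀ q' ∈ stdSimplex ℝ Y, F q ≤ F q') → q = qs) := by
  intro F qs
  set g : Y → ℝ := fun y => (∏ k, p k y) ^ ((1 : ℝ) / K) with hg
  have hKpos : (0 : ℝ) < K := by exact_mod_cast hK
  have hgpos : ∀ y, 0 < g y := fun y =>
    Real.rpow_pos_of_pos (Finset.prod_pos fun k _ => hpos k y) _
  set Z : ℝ := ∑ y', g y' with hZ
  have hZpos : 0 < Z := Finset.sum_pos (fun y _ => hgpos y) Finset.univ_nonempty
  have hqs : ∀ y, qs y = g y / Z := fun y => rfl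
  have hqspos : ∀ y, 0 < qs y := fun y => div_pos (hgpos y) hZpos
  have hqssum : ∑ y, qs y = 1 := by
    simp only [hqs]
    rw [← Finset.sum_div]
    field_simp
    exact hZ.symm
  have hqsmem : qs ∈ stdSimplex ℝ Y := ⟨fun y => (hqspos y).le, hqssum⟩
  -- log of g
  have hlogg : ∀ y, Real.log (g y) = ((1 : ℝ) / K) * ∑ k, Real.log (p k y) := by
    intro y
    rw [hg]
    rw [Real.log_rpow (Finset.prod_pos fun k _ => hpos k y),
      Real.log_prod (fun k _ => (hpos k y).ne')]
  -- rewriting F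
  have hF : ∀ q ∈ stdSimplex ℝ Y,
      F q = (∑ y, q y * (Real.log (q y) - Real.log (qs y))) - Real.log Z := by
    intro q hq
    have key : ∀ y, ((1 : ℝ) / K) * ∑ k, q y * Real.log (q y / p k y)
        = q y * (Real.log (q y) - Real.log (g y)) := by
      intro y
      rcases eq_or_lt_of_le (hq.1 y) with h | h
      · simp [← h]
      · have : ∀ k : Fin K, q y * Real.log (q y / p k y)
            = q y * Real.log (q y) - q y * Real.log (p k y) := by
          intro k
          rw [Real.log_div h.ne' (hpos k y).ne', mul_sub]
        rw [Finset.sum_congr rfl fun k _ => this k, Finset.sum_sub_distrib,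
          Finset.sum_const, Finset.card_univ, Fintype.card_fin, ← Finset.mul_sum,
          hlogg y]
        push_cast
        field_simp
        ring
    have hlogqs : ∀ y, Real.log (qs y) = Real.log (g y) - Real.log Z := by
      intro y
      rw [hqs, Real.log_div (hgpos y).ne' hZpos.ne']
    calc F q = ∑ y, ((1 : ℝ) / K) * ∑ k, q y * Real.log (q y / p k y) := by
            simp only [F, Finset.mul_sum]; rw [Finset.sum_comm]
      _ = ∑ y, q y * (Real.log (q y) - Real.log (g y)) :=
            Finset.sum_congr rfl fun y _ => key y
      _ = ∑ y, (q y * (Real.log (q y) - Real.log (qs y)) - q y * Real.log Z) := by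
            refine Finset.sum_congr rfl fun y _ => ?_
            rw [hlogqs y]; ring
      _ = (∑ y, q y * (Real.log (q y) - Real.log (qs y))) - Real.log Z := by
            rw [Finset.sum_sub_distrib, ← Finset.sum_mul, hq.2, one_mul]
  have hFqs : F qs = -Real.log Z := by
    rw [hF qs hqsmem]
    simp
  -- main inequality
  have hmain : ∀ q ∈ stdSimplex ℝ Y, F qs ≤ F q := by
    intro q hq
    rw [hF q hq, hFqs]
    have : (0 : ℝ) ≤ ∑ y, q y * (Real.log (q y) - Real.log (qs y)) := by
      have hb : ∑ y, (q y - qs y) ≤ ∑ y, q y * (Real.log (q y) - Real.log (qs y)) :=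
        Finset.sum_le_sum fun y _ => gibbs_term_le (hq.1 y) (hqspos y)
      rwa [Finset.sum_sub_distrib, hq.2, hqssum, sub_self] at hb
    linarith
  refine ⟨hqsmem, hmain, ?_⟩
  intro q hq hmin
  by_contra hne
  have hy : ∃ y, q y ≠ qs y := by
    by_contra h
    push_neg at h
    exact hne (funext h)
  obtain ⟨y₀, hy₀⟩ := hy
  have hstrict : (0 : ℝ) < ∑ y, q y * (Real.log (q y) - Real.log (qs y)) := by
    have hb : ∑ y, (q y - qs y) < ∑ y, q y * (Real.log (q y) - Real.log (qs y)) := by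
      apply Finset.sum_lt_sum (fun y _ => gibbs_term_le (hq.1 y) (hqspos y))
      exact ⟨y₀, Finset.mem_univ _, gibbs_term_lt (hq.1 y₀) (hqspos y₀) hy₀⟩
    rwa [Finset.sum_sub_distrib, hq.2, hqssum, sub_self] at hb
  have h1 : F qs < F q := by
    rw [hF q hq, hFqs]; linarith
  exact absurd (hmin qs hqsmem) (not_le.mpr h1)
end

section
/- Let E be a real inner product space, s ⊆ E a convex set, μ > 0, and f : E → ℝ a function that is μ-strongly convex on s. Let v ∈ E and define g(x) = f(x) + ⟨v, x⟩. If x₁ ∈ s minimizes f over s and x₂ ∈ s minimizes g over s, then ‖x₁ − x₂‖ ≤ ‖v‖ / μ; i.e. the minimizer of a strongly convex objective is stable under linear perturbations, with displacement bounded by the norm of the perturbing gradient divided by the strong convexity modulus. -/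
lemma strong_min_growth (E : Type*) [NormedAddCommGroup E] [InnerProductSpace ℝ E]
    (s : Set E) (μ : ℝ) (hμ : 0 < μ) (h : E → ℝ)
    (hconv : ConvexOn ℝ s (fun x => h x - μ / 2 * ‖x‖ ^ 2))
    (x₀ : E) (hx₀ : x₀ ∈ s) (hmin : ∀ x ∈ s, h x₀ ≤ h x)
    (x : E) (hx : x ∈ s) :
    h x₀ + μ / 2 * ‖x - x₀‖ ^ 2 ≤ h x := by
  apply le_of_forall_pos_le_add
  intro ε hε
  have hc0 : (0:ℝ) ≤ μ / 2 * ‖x - x₀‖ ^ 2 := by positivity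
  set t : ℝ := min 1 (ε / (μ / 2 * ‖x - x₀‖ ^ 2 + 1)) with ht
  have ht0 : 0 < t := lt_min one_pos (by positivity)
  have ht1 : t ≤ 1 := min_le_left _ _
  have htc : t * (μ / 2 * ‖x - x₀‖ ^ 2) ≤ ε := by
    have h1 : t ≤ ε / (μ / 2 * ‖x - x₀‖ ^ 2 + 1) := min_le_right _ _
    have h2 : t * (μ / 2 * ‖x - x₀‖ ^ 2 + 1) ≤ ε := by
      rw [← le_div_iff₀ (by positivity)]; exact h1
    nlinarith
  have hcomb := hconv.2 hx₀ hx (by linarith : (0:ℝ) ≤ 1 - t) (le_of_lt ht0) (by ring)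
  have hmem : (1 - t) • x₀ + t • x ∈ s := hconv.1 hx₀ hx (by linarith) (le_of_lt ht0) (by ring)
  have hm := hmin _ hmem
  have hexp : ‖(1 - t) • x₀ + t • x‖ ^ 2
      = ‖x₀‖ ^ 2 + 2 * t * (inner ℝ x₀ (x - x₀) : ℝ) + t ^ 2 * ‖x - x₀‖ ^ 2 := by
    have heq : (1 - t) • x₀ + t • x = x₀ + t • (x - x₀) := by
      rw [smul_sub, sub_smul, one_smul]; abel
    rw [heq, @norm_add_sq_real, real_inner_smul_right, norm_smul]
    simp [mul_pow, sq_abs]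
    ring
  have hexp2 : ‖x‖ ^ 2 = ‖x₀‖ ^ 2 + 2 * (inner ℝ x₀ (x - x₀) : ℝ) + ‖x - x₀‖ ^ 2 := by
    have heq : x = x₀ + (x - x₀) := by abel
    nth_rewrite 1 [heq]
    rw [@norm_add_sq_real]
  simp only [smul_eq_mul] at hcomb
  rw [hexp, hexp2] at hcomb
  have key2 : t * (h x₀ + μ / 2 * ‖x - x₀‖ ^ 2)
      ≤ t * (h x + t * (μ / 2 * ‖x - x₀‖ ^ 2)) := by nlinarith [hcomb, hm]
  have key : h x₀ + μ / 2 * ‖x - x₀‖ ^ 2 ≤ h x + t * (μ / 2 * ‖x - x₀‖ ^ 2) :=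
    le_of_mul_le_mul_left key2 ht0
  linarith

/-- Stability of minimizers of strongly convex functions under linear
perturbation.  `f` is `μ`-strongly convex on the convex set `s` in the sense that
`x ↦ f x − (μ/2)‖x‖²` is convex on `s`.  If `x₁` minimizes `f` over `s` and `x₂`
minimizes `g = f + ⟨v, ·⟩` over `s`, then `‖x₁ − x₂‖ ≤ ‖v‖ / μ`. -/
theorem strongly_convex_minimizer_stability
    (E : Type*) [NormedAddCommGroup E] [InnerProductSpace ℝ E]
    (s : Set E) (hs : Convex ℝ s) (μ : ℝ) (hμ : 0 < μ)
    (f : E → ℝ)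
    (hf : ConvexOn ℝ s (fun x => f x - μ / 2 * ‖x‖ ^ 2))
    (v : E)
    (x₁ : E) (hx₁ : x₁ ∈ s) (hmin₁ : ∀ x ∈ s, f x₁ ≤ f x)
    (x₂ : E) (hx₂ : x₂ ∈ s)
    (hmin₂ : ∀ x ∈ s, f x₂ + (inner ℝ v x₂ : ℝ) ≤ f x + (inner ℝ v x : ℝ)) :
    ‖x₁ - x₂‖ ≤ ‖v‖ / μ := by
  have hlin : ConvexOn ℝ s (fun x => (inner ℝ v x : ℝ)) := by
    refine ⟨hs, ?_⟩
    intro a ha b hb p q hp hq hpq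
    simp [inner_add_right, real_inner_smul_right]
  have hg : ConvexOn ℝ s (fun x => (f x + (inner ℝ v x : ℝ)) - μ / 2 * ‖x‖ ^ 2) := by
    have heq : (fun x => (f x + (inner ℝ v x : ℝ)) - μ / 2 * ‖x‖ ^ 2)
        = (fun x => f x - μ / 2 * ‖x‖ ^ 2) + (fun x => (inner ℝ v x : ℝ)) := by
      ext x; simp [Pi.add_apply]; ring
    rw [heq]; exact hf.add hlin
  have h1 := strong_min_growth E s μ hμ f hf x₁ hx₁ hmin₁ x₂ hx₂
  have h2 := strong_min_growth E s μ hμ (fun x => f x + (inner ℝ v x : ℝ)) hg x₂ hx₂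
    hmin₂ x₁ hx₁
  rw [norm_sub_rev] at h1
  have hd : μ * ‖x₁ - x₂‖ ^ 2 ≤ (inner ℝ v (x₁ - x₂) : ℝ) := by
    rw [inner_sub_right]; linarith
  have hcs : (inner ℝ v (x₁ - x₂) : ℝ) ≤ ‖v‖ * ‖x₁ - x₂‖ := real_inner_le_norm v _
  rcases eq_or_lt_of_le (norm_nonneg (x₁ - x₂)) with h0 | h0
  · rw [← h0]; positivity
  · rw [le_div_iff₀ hμ]
    nlinarith [hd, hcs, h0]
end

section
/- Let Z be a finite nonempty type, β > 0, r : Z → ℝ, and let R : Δ(Z) → ℝ be the linear functional R(ν) = −∑_{z ∈ Z} ν(z) r(z), with Fenchel conjugate R*(u) = sup_{ν ∈ Δ(Z)} (⟨ν, u⟩ − R(ν)) = max_{z ∈ Z} (u(z) + r(z)). Define q*(z) = exp(r(z)/β) / (∑_{z' ∈ Z} exp(r(z')/β)). Then for every ν ∈ Δ(Z), the strictly positive target q* attains the supremum in the variational representation: −β ∑_{z ∈ Z} ν(z) log q*(z) − R*(−β log q*) = R(ν); i.e. for a linear (standard-RL) answer-level objective, the optimal target distribution is the exponentiated reward q*(z)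 ∝ exp(r(z)/β), independently of ν. -/
/-- For the linear (standard-RL) answer-level objective
`R(ν) = −∑ z, ν z r z`, the Fenchel conjugate over the simplex equals
`R*(u) = max_z (u z + r z)`, and the strictly positive exponentiated-reward target
`q*(z) = exp(r z / β) / ∑ z', exp(r z' / β)` attains the supremum in the variational
representation: for every `ν ∈ Δ(Z)`,
`−β ∑ z, ν z log (q* z) − R*(−β log q*) = R(ν)`. -/
theorem linear_objective_optimal_target_is_exponentiated_reward
    (Z : Type*) [Fintype Z] [Nonempty Z]
    (β : ℝ) (hβ : 0 < β) (r : Z → ℝ) :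
    let R : (Z → ℝ) → ℝ := fun ν => -∑ z, ν z * r z
    let Rstar : (Z → ℝ) → ℝ := fun u =>
      sSup ((fun ν : Z → ℝ => (∑ z, ν z * u z) - R ν) '' stdSimplex ℝ Z)
    let qs : Z → ℝ := fun z => Real.exp (r z / β) / ∑ z', Real.exp (r z' / β)
    (∀ u : Z → ℝ, Rstar u = ⨆ z, (u z + r z)) ∧
      (∀ z, 0 < qs z) ∧ qs ∈ stdSimplex ℝ Z ∧
      (∀ ν ∈ stdSimplex ℝ Z,
        (-β * ∑ z, ν z * Real.log (qs z)) - Rstar (fun z => -β * Real.log (qs z))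
          = R ν) := by
  classical
  intro R Rstar qs
  have hSpos : 0 < ∑ z', Real.exp (r z' / β) :=
    Finset.sum_pos (fun z _ => Real.exp_pos _) Finset.univ_nonempty
  -- main conjugate formula
  have hRstar : ∀ u : Z → ℝ, Rstar u = ⨆ z, (u z + r z) := by
    intro u
    obtain ⟨x0, hx0⟩ := Finite.exists_max (fun z => u z + r z)
    have hval : ∀ ν ∈ stdSimplex ℝ Z,
        (∑ z, ν z * u z) - R ν = ∑ z, ν z * (u z + r z) := by
      intro ν _
      simp only [R, sub_neg_eq_add, ← Finset.sum_add_distrib, mul_add]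
    have hub : ∀ x ∈ ((fun ν : Z → ℝ => (∑ z, ν z * u z) - R ν) '' stdSimplex ℝ Z),
        x ≤ u x0 + r x0 := by
      rintro x ⟨ν, hν, rfl⟩
      dsimp only
      rw [hval ν hν]
      calc ∑ z, ν z * (u z + r z) ≤ ∑ z, ν z * (u x0 + r x0) :=
            Finset.sum_le_sum (fun z _ => mul_le_mul_of_nonneg_left (hx0 z) (hν.1 z))
        _ = u x0 + r x0 := by rw [← Finset.sum_mul, hν.2, one_mul]
    have hδ : (fun z => if z = x0 then (1:ℝ) else 0) ∈ stdSimplex ℝ Z := by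
      constructor
      · intro z; dsimp only; split <;> norm_num
      · simp
    have hmem : (u x0 + r x0) ∈
        ((fun ν : Z → ℝ => (∑ z, ν z * u z) - R ν) '' stdSimplex ℝ Z) := by
      refine ⟨_, hδ, ?_⟩
      dsimp only
      rw [hval _ hδ]
      simp [Finset.sum_ite_eq']
    have h1 : Rstar u = u x0 + r x0 :=
      le_antisymm (csSup_le ⟨_, hmem⟩ hub) (le_csSup ⟨_, hub⟩ hmem)
    have h2 : (⨆ z, (u z + r z)) = u x0 + r x0 :=
      le_antisymm (ciSup_le hx0) (le_ciSup ⟨u x0 + r x0, fun x ⟨z, hz⟩ => hz ▸ hx0 z⟩ x0)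
    rw [h1, h2]
  refine ⟨hRstar, fun z => div_pos (Real.exp_pos _) hSpos, ⟨fun z => le_of_lt (div_pos (Real.exp_pos _) hSpos), by rw [← Finset.sum_div]; exact div_self (ne_of_gt hSpos)⟩, ?_⟩
  intro ν hν
  have hlog : ∀ z, Real.log (qs z) = r z / β - Real.log (∑ z', Real.exp (r z' / β)) := by
    intro z
    rw [show qs z = _ / _ from rfl, Real.log_div (Real.exp_ne_zero _) (ne_of_gt hSpos),
      Real.log_exp]
  set L := Real.log (∑ z', Real.exp (r z' / β)) with hL
  have hconst : (fun z => -β * Real.log (qs z) + r z) = fun _ => β * L := by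
    funext z; rw [hlog z]; field_simp; ring
  have hR2 : Rstar (fun z => -β * Real.log (qs z)) = β * L := by
    rw [hRstar]; have := hconst; simp only [funext_iff] at this
    calc (⨆ z, (-β * Real.log (qs z) + r z)) = ⨆ _ : Z, β * L := by
          exact iSup_congr this
      _ = β * L := ciSup_const
  rw [hR2]
  have hsum : (∑ z, ν z * Real.log (qs z)) = (∑ z, ν z * r z) / β - L := by
    have : ∀ z, ν z * Real.log (qs z) = ν z * r z / β - ν z * L := by
      intro z; rw [hlog z]; ring
    rw [Finset.sum_congr rfl (fun z _ => this z), Finset.sum_sub_distrib,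
      ← Finset.sum_div, ← Finset.sum_mul, hν.2, one_mul]
  rw [hsum]
  show -β * ((∑ z, ν z * r z) / β - L) - β * L = -∑ z, ν z * r z
  field_simp
  ring
end
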